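/- With G a finite rooted tree and c(ρ) = ∏_{v∈V} (1 − ∑_{v'∈A(v)} ρ_{v'}) / (1 − ∑_{v'∈Ā(v)} ρ_{v'}) defined on the open region where ∑_{v'∈Ā(v)} ρ_{v'} < 1 for all v, one has for each vertex v: ρ_v · ∂(ln c(ρ))/∂ρ_v = ρ_v · ∑_{v'∈D̄(v)} (1 − d(v')) / (1 − ∑_{v''∈Ā(v')} ρ_{v''}), where d(v') is the number of children of v'. -/

import Mathlib

/-! Since `c(ρ)` is a product of ratios, `ln c = ∑_w (ln (1 - ∑_{A(w)} ρ) - ln (1 - ∑_{Ā(w)} ρ))`.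
Differentiating in `ρ_v` gives `1 / (1 - ∑_{Ā(w)} ρ)` for each `w ∈ D̄(v)`, minus
`1 / (1 - ∑_{A(w)} ρ)` for each strict descendant `w` of `v`. As `A(w) = Ā(parent w)`, each
`u ∈ D̄(v)` occurs in the second sum once per child, which yields the factor `1 - d(u)`. -/

open Finset

def ancestors {n : ℕ} [NeZero n] (par : Fin n → Fin n) (hpar : ∀ v, v ≠ 0 → par v < v) :
    Fin n → Finset (Fin n) :=
  fun v =>
    if h : v = 0 then ∅ else insert (par v) (ancestors par hpar (par v))
termination_by v => (v : ℕ)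
decreasing_by exact hpar _ h

/-- `v` together with its strict ancestors. -/
def barA {n : ℕ} [NeZero n] (par : Fin n → Fin n) (hpar : ∀ v, v ≠ 0 → par v < v)
    (v : Fin n) : Finset (Fin n) :=
  insert v (ancestors par hpar v)

/-- `v` together with its descendants. -/
def barD {n : ℕ} [NeZero n] (par : Fin n → Fin n) (hpar : ∀ v, v ≠ 0 → par v < v)
    (v : Fin n) : Finset (Fin n) :=
  Finset.univ.filter (fun w => v ∈ barA par hpar w)

/-- strict descendants of `v`. -/
def strictD {n : ℕ} [NeZero n] (par : Fin n → Fin n) (hpar : ∀ v, v ≠ 0 → par v < v)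
    (v : Fin n) : Finset (Fin n) :=
  Finset.univ.filter (fun w => v ∈ ancestors par hpar w)

/-- children of `v`. -/
def children {n : ℕ} [NeZero n] (par : Fin n → Fin n) (v : Fin n) : Finset (Fin n) :=
  Finset.univ.filter (fun w => w ≠ 0 ∧ par w = v)

open Filter Topology

section Derivative

variable {α : Type*} [DecidableEq α] (ρ : α → ℝ) (v : α)

theorem hasDerivAt_sum_update (s : Finset α) :
    HasDerivAt (fun t => ∑ x ∈ s, Function.update ρ v t x) (if v ∈ s then 1 else 0) (ρ v) := by
  have h : ∀ x ∈ s, HasDerivAt (fun t => Function.update ρ v t x)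
      (if x = v then 1 else 0) (ρ v) := by
    intro x _
    by_cases hx : x = v
    · subst hx; simpa using hasDerivAt_id' (ρ x)
    · simpa [hx] using hasDerivAt_const (ρ v) (ρ x)
  simpa [Finset.sum_ite_eq'] using HasDerivAt.fun_sum h

theorem hasDerivAt_log_one_sub_sum_update (s : Finset α) (hs : ∑ x ∈ s, ρ x ≠ 1) :
    HasDerivAt (fun t => Real.log (1 - ∑ x ∈ s, Function.update ρ v t x))
      (-if v ∈ s then (1 - ∑ x ∈ s, ρ x)⁻¹ else 0) (ρ v) := by
  have h := ((hasDerivAt_const (ρ v) (1 : ℝ)).sub (hasDerivAt_sum_update ρ v s)).log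
    (by simpa using sub_ne_zero.2 hs.symm)
  refine h.congr_deriv ?_
  split_ifs <;> simp [div_eq_inv_mul]

theorem eventually_sum_update_ne_one (s : Finset α) (hs : ∑ x ∈ s, ρ x ≠ 1) :
    ∀ᶠ t in 𝓝 (ρ v), ∑ x ∈ s, Function.update ρ v t x ≠ 1 := by
  refine (hasDerivAt_sum_update ρ v s).continuousAt.eventually_ne ?_
  simpa using hs

theorem hasDerivAt_log_prod_div_update {ι : Type*} [Fintype ι] (s t : ι → Finset α)
    (hs : ∀ i, ∑ x ∈ s i, ρ x ≠ 1) (ht : ∀ i, ∑ x ∈ t i, ρ x ≠ 1) :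
    HasDerivAt
      (fun τ => Real.log (∏ i, (1 - ∑ x ∈ s i, Function.update ρ v τ x) /
        (1 - ∑ x ∈ t i, Function.update ρ v τ x)))
      (∑ i, ((if v ∈ t i then (1 - ∑ x ∈ t i, ρ x)⁻¹ else 0) -
        (if v ∈ s i then (1 - ∑ x ∈ s i, ρ x)⁻¹ else 0))) (ρ v) := by
  have hsum : HasDerivAt
      (fun τ => ∑ i, (Real.log (1 - ∑ x ∈ s i, Function.update ρ v τ x) -
        Real.log (1 - ∑ x ∈ t i, Function.update ρ v τ x)))
      (∑ i, ((if v ∈ t i then (1 - ∑ x ∈ t i, ρ x)⁻¹ else 0) -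
        (if v ∈ s i then (1 - ∑ x ∈ s i, ρ x)⁻¹ else 0))) (ρ v) := by
    refine (HasDerivAt.fun_sum fun i _ =>
      (hasDerivAt_log_one_sub_sum_update ρ v (s i) (hs i)).sub
        (hasDerivAt_log_one_sub_sum_update ρ v (t i) (ht i))).congr_deriv ?_
    exact Finset.sum_congr rfl fun _ _ => by ring
  have hne : ∀ᶠ τ in 𝓝 (ρ v), ∀ i, ∑ x ∈ s i, Function.update ρ v τ x ≠ 1 ∧
      ∑ x ∈ t i, Function.update ρ v τ x ≠ 1 := eventually_all.2 fun i =>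
    (eventually_sum_update_ne_one ρ v _ (hs i)).and (eventually_sum_update_ne_one ρ v _ (ht i))
  refine hsum.congr_of_eventuallyEq ?_
  filter_upwards [hne] with τ hτ
  have hs' : ∀ i, 1 - ∑ x ∈ s i, Function.update ρ v τ x ≠ 0 :=
    fun i => sub_ne_zero.2 (hτ i).1.symm
  have ht' : ∀ i, 1 - ∑ x ∈ t i, Function.update ρ v τ x ≠ 0 :=
    fun i => sub_ne_zero.2 (hτ i).2.symm
  rw [Real.log_prod fun i _ => div_ne_zero (hs' i) (ht' i)]
  exact Finset.sum_congr rfl fun i _ => Real.log_div (hs' i) (ht' i)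

end Derivative

section Tree

variable {n : ℕ} [NeZero n] (par : Fin n → Fin n) (hpar : ∀ v, v ≠ 0 → par v < v)

theorem ancestors_zero : ancestors par hpar 0 = ∅ := by
  rw [ancestors]; simp

theorem ancestors_of_ne_zero {w : Fin n} (hw : w ≠ 0) :
    ancestors par hpar w = barA par hpar (par w) := by
  rw [ancestors]; simp [hw, barA]

theorem mem_strictD_iff {v w : Fin n} :
    w ∈ strictD par hpar v ↔ w ≠ 0 ∧ par w ∈ barD par hpar v := by
  by_cases hw : w = 0
  · simp [strictD, hw, ancestors_zero]
  · simp [strictD, barD, hw, ancestors_of_ne_zero par hpar hw]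

theorem sum_ancestors_lt_one (ρ : Fin n → ℝ) (hload : ∀ v, ∑ x ∈ barA par hpar v, ρ x < 1)
    (w : Fin n) : ∑ x ∈ ancestors par hpar w, ρ x < 1 := by
  by_cases hw : w = 0
  · simp [hw, ancestors_zero]
  · rw [ancestors_of_ne_zero par hpar hw]; exact hload _

theorem sum_strictD_ancestors {M : Type*} [AddCommMonoid M] (g : Finset (Fin n) → M)
    (v : Fin n) :
    ∑ w ∈ strictD par hpar v, g (ancestors par hpar w) =
      ∑ u ∈ barD par hpar v, (children par u).card • g (barA par hpar u) := by
  have hmaps : ∀ w ∈ strictD par hpar v, par w ∈ barD par hpar v :=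
    fun w hw => ((mem_strictD_iff par hpar).1 hw).2
  have hfiber : ∀ u ∈ barD par hpar v,
      {w ∈ strictD par hpar v | par w = u} = children par u := by
    intro u hu
    ext w
    simp only [Finset.mem_filter, mem_strictD_iff, children, Finset.mem_univ, true_and]
    constructor
    · rintro ⟨⟨hw, -⟩, rfl⟩; exact ⟨hw, rfl⟩
    · rintro ⟨hw, rfl⟩; exact ⟨⟨hw, hu⟩, rfl⟩
  rw [Finset.sum_congr rfl fun w hw =>
      congrArg g (ancestors_of_ne_zero par hpar ((mem_strictD_iff par hpar).1 hw).1),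
    ← Finset.sum_fiberwise_of_maps_to' hmaps (fun u => g (barA par hpar u))]
  exact Finset.sum_congr rfl fun u hu => by rw [Finset.sum_const, hfiber u hu]

end Tree

theorem pf_mean_customers_deriv_general {n : ℕ} [NeZero n] (par : Fin n → Fin n)
    (hpar : ∀ v, v ≠ 0 → par v < v) (ρ : Fin n → ℝ)
    (hload : ∀ v, ∑ v' ∈ barA par hpar v, ρ v' < 1) (v : Fin n) (d : ℝ)
    (hd : HasDerivAt
      (fun t : ℝ => Real.log (∏ w,
        (1 - ∑ v' ∈ ancestors par hpar w, Function.update ρ v t v') /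
        (1 - ∑ v' ∈ barA par hpar w, Function.update ρ v t v')))
      d (ρ v)) :
    ρ v * d =
      ρ v * ∑ v' ∈ barD par hpar v,
        (1 - ((children par v').card : ℝ)) / (1 - ∑ v'' ∈ barA par hpar v', ρ v'') := by
  have hd' := hasDerivAt_log_prod_div_update ρ v (ancestors par hpar) (barA par hpar)
    (fun w => (sum_ancestors_lt_one par hpar ρ hload w).ne) (fun w => (hload w).ne)
  rw [hd.unique hd']
  congr 1
  rw [Finset.sum_sub_distrib, ← Finset.sum_filter, ← Finset.sum_filter]
  change ∑ w ∈ barD par hpar v, (_ : ℝ) - ∑ w ∈ strictD par hpar v, _ = _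
  rw [sum_strictD_ancestors par hpar (fun s : Finset (Fin n) => (1 - ∑ x ∈ s, ρ x)⁻¹),
    ← Finset.sum_sub_distrib]
  refine Finset.sum_congr rfl fun u _ => ?_
  rw [nsmul_eq_mul]
  ring

/-- Mean queue lengths under PF via differentiation of the log of the normalization
constant: if `d` is the derivative of `t ↦ ln c(ρ[v := t])` at `t = ρ_v`, then
`ρ_v · d = ρ_v · ∑_{v' ∈ D̄(v)} (1 - d(v')) / (1 - ∑_{v'' ∈ Ā(v')} ρ_{v''})`, where
`c(ρ) = ∏_v (1 - ∑_{A(v)} ρ)/(1 - ∑_{Ā(v)} ρ)` and `d(v')` is the number of children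
of `v'`. -/
theorem pf_mean_customers_deriv {n : ℕ} [NeZero n] (par : Fin n → Fin n)
    (hpar : ∀ v, v ≠ 0 → par v < v) (ρ : Fin n → ℝ) (hρ : ∀ v, 0 ≤ ρ v)
    (hload : ∀ v, ∑ v' ∈ barA par hpar v, ρ v' < 1) (v : Fin n) (d : ℝ)
    (hd : HasDerivAt
      (fun t : ℝ => Real.log (∏ w,
        (1 - ∑ v' ∈ ancestors par hpar w, Function.update ρ v t v') /
        (1 - ∑ v' ∈ barA par hpar w, Function.update ρ v t v')))
      d (ρ v)) :
    ρ v * d =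
      ρ v * ∑ v' ∈ barD par hpar v,
        (1 - ((children par v').card : ℝ)) / (1 - ∑ v'' ∈ barA par hpar v', ρ v'') :=
  pf_mean_customers_deriv_general par hpar ρ hload v d hd
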